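/- arXiv:math/9909131 — 3 statements merged into one kernel-verified Lean document; each statement's English description precedes it below -/
import Mathlib

section
/- With the notation of the two-circle configuration: if c and d are circles of radii r and s tangent to a line at points at distance t apart, bounding disjoint discs, with t ≥ r + s and r ≥ s, and R (resp. S) is the radius of the half-circle orthogonal to the line tangent to both c and d which first meets d (resp. first meets c), then R ≥ S. (Here R and S are the positive solutions of R^2(t^2-(r+s)^2) + Rt^2(s-r) - t^2/4 = 0 and S^2(t^2-(r+s)^2) + St^2(r-s) - t^2/4 = 0 respectively.) -/
/-- Algebraic core of the lemma on heights of common tangent circles: if `R` and `S`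
are the positive roots of the two quadratics, `t ≥ r + s` and `r ≥ s`, then `R ≥ S`. -/
theorem stmt1 (r s t R S : ℝ) (hr : 0 < r) (hs : 0 < s) (ht : 0 < t)
    (hR : 0 < R) (hS : 0 < S) (hts : r + s ≤ t) (hrs : s ≤ r)
    (heqR : R ^ 2 * (t ^ 2 - (r + s) ^ 2) + R * t ^ 2 * (s - r) - t ^ 2 / 4 = 0)
    (heqS : S ^ 2 * (t ^ 2 - (r + s) ^ 2) + S * t ^ 2 * (r - s) - t ^ 2 / 4 = 0) :
    S ≤ R := by
  have hA : 0 ≤ t ^ 2 - (r + s) ^ 2 := by nlinarith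
  have key : (R + S) * ((R - S) * (t ^ 2 - (r + s) ^ 2) - t ^ 2 * (r - s)) = 0 := by
    linear_combination heqR - heqS
  rcases eq_or_lt_of_le hA with h0 | hpos
  · exfalso
    nlinarith [mul_nonneg (mul_nonneg hR.le (sq_nonneg t)) (sub_nonneg.mpr hrs), pow_pos ht 2]
  · have hRS : 0 < R + S := by linarith
    have h2 : (R - S) * (t ^ 2 - (r + s) ^ 2) - t ^ 2 * (r - s) = 0 := by
      rcases mul_eq_zero.mp key with h | h
      · linarith
      · exact h
    nlinarith [mul_nonneg (pow_nonneg ht.le 2) (sub_nonneg.mpr hrs)]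
end

section
/- In the upper half-space model of H³, for any γ ∈ SL₂(ℂ) with c(γ) ≠ 0 and any h > 0, the set of points equidistant from the horizontal horosphere {t = h} (centered at ∞) and the horosphere centered at γ⁻¹(∞) of Euclidean diameter 1/(h|c(γ)|²) is the hemisphere centered at γ⁻¹(∞) of Euclidean radius 1/|c(γ)| (the isometric sphere of γ). -/
open Complex Matrix

/-! The signed distances from `(z, t)` to the horoball `{t ≥ h}` and to the horoball at `w` of
diameter `δ` are `log (h / t)` and `log ((|z - w|² + t²) / (δ t))`, so they agree exactly when
`|z - w|² + t² = h δ`. For `δ = 1 / (h |c|²)` this is the sphere of radius `1 / |c|`. -/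

lemma log_div_eq_log_div_mul_iff {h t S δ : ℝ} (hh : 0 < h) (ht : 0 < t) (hS : 0 < S)
    (hδ : 0 < δ) : Real.log (h / t) = Real.log (S / (δ * t)) ↔ S = h * δ := by
  rw [Real.log_injOn_pos.eq_iff (div_pos hh ht) (div_pos hS (mul_pos hδ ht)),
    div_eq_div_iff ht.ne' (mul_pos hδ ht).ne']
  constructor
  · intro h_eq
    nlinarith
  · rintro rfl
    ring

theorem setOf_log_eq_log_horoball_eq_sphere {E : Type*} [SeminormedAddCommGroup E] (w : E)
    {h δ : ℝ} (hh : 0 < h) (hδ : 0 < δ) :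
    {p : E × ℝ | 0 < p.2 ∧
        Real.log (h / p.2) = Real.log ((‖p.1 - w‖ ^ 2 + p.2 ^ 2) / (δ * p.2))} =
      {p : E × ℝ | 0 < p.2 ∧ ‖p.1 - w‖ ^ 2 + p.2 ^ 2 = h * δ} :=
  Set.ext fun _ => and_congr_right fun ht => log_div_eq_log_div_mul_iff hh ht (by positivity) hδ

theorem stmt6_general (c d : ℂ) (h : ℝ)
    (hc0 : c ≠ 0) (hh : 0 < h) :
    {p : ℂ × ℝ | 0 < p.2 ∧
        Real.log (h / p.2) =
          Real.log ((‖p.1 - (-d / c)‖ ^ 2 + p.2 ^ 2) /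
            ((1 / (h * ‖c‖ ^ 2)) * p.2))} =
      {p : ℂ × ℝ | 0 < p.2 ∧
        ‖p.1 - (-d / c)‖ ^ 2 + p.2 ^ 2 = (1 / ‖c‖) ^ 2} := by
  have hc : 0 < ‖c‖ := norm_pos_iff.mpr hc0
  have hδ : h * (1 / (h * ‖c‖ ^ 2)) = (1 / ‖c‖) ^ 2 := by field_simp
  rw [setOf_log_eq_log_horoball_eq_sphere _ hh (by positivity), hδ]

/-- In the upper half-space model of `ℍ³`, for `γ ∈ SL₂(ℂ)` with `c = c(γ) ≠ 0` and
`h > 0`, the set of points `(z, t)` (with `t > 0`) whose signed hyperbolic distance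
`log (h / t)` to the horoball `{t ≥ h}` at `∞` equals the signed distance
`log ((|z - w|² + t²) / (δ t))` to the horoball at `w = γ⁻¹(∞) = -d/c` of Euclidean
diameter `δ = 1/(h |c|²)`, is the hemisphere centered at `γ⁻¹(∞)` of Euclidean radius
`1/|c|` (the isometric sphere of `γ`). -/
theorem stmt6 (γ : Matrix.SpecialLinearGroup (Fin 2) ℂ)
    (a b c d : ℂ) (h : ℝ)
    (ha : a = (γ : Matrix (Fin 2) (Fin 2) ℂ) 0 0) (hb : b = (γ : Matrix (Fin 2) (Fin 2) ℂ) 0 1)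
    (hc : c = (γ : Matrix (Fin 2) (Fin 2) ℂ) 1 0) (hd : d = (γ : Matrix (Fin 2) (Fin 2) ℂ) 1 1)
    (hc0 : c ≠ 0) (hh : 0 < h) :
    {p : ℂ × ℝ | 0 < p.2 ∧
        Real.log (h / p.2) =
          Real.log ((‖p.1 - (-d / c)‖ ^ 2 + p.2 ^ 2) /
            ((1 / (h * ‖c‖ ^ 2)) * p.2))} =
      {p : ℂ × ℝ | 0 < p.2 ∧
        ‖p.1 - (-d / c)‖ ^ 2 + p.2 ^ 2 = (1 / ‖c‖) ^ 2} :=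
  stmt6_general c d h hc0 hh
end

section
/- For ℓ in the interval [2 ln(1+√2), 2 ln((3+√5)/2)], the quantity g(ℓ) = (sinh(ℓ/2)·(cosh(ℓ/2) − √(cosh²(ℓ/2) − 2)) − 1)/sinh²(ℓ/2) is positive. Equivalently, sinh(ℓ/2)·(cosh(ℓ/2) − √(cosh²(ℓ/2) − 2)) > 1 on this interval. -/
open Real

/-- For `ℓ ∈ [2 ln(1+√2), 2 ln((3+√5)/2)]`, one has
`sinh(ℓ/2)·(cosh(ℓ/2) − √(cosh²(ℓ/2) − 2)) > 1`; equivalently, the quantity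
`(sinh(ℓ/2)(cosh(ℓ/2) − √(cosh²(ℓ/2) − 2)) − 1)/sinh²(ℓ/2)` is positive. -/
theorem stmt15 (ℓ : ℝ)
    (h1 : 2 * Real.log (1 + Real.sqrt 2) ≤ ℓ)
    (h2 : ℓ ≤ 2 * Real.log ((3 + Real.sqrt 5) / 2)) :
    0 < (Real.sinh (ℓ / 2) *
          (Real.cosh (ℓ / 2) - Real.sqrt (Real.cosh (ℓ / 2) ^ 2 - 2)) - 1) /
        Real.sinh (ℓ / 2) ^ 2 ∧
    1 < Real.sinh (ℓ / 2) *
          (Real.cosh (ℓ / 2) - Real.sqrt (Real.cosh (ℓ / 2) ^ 2 - 2)) := by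
  set t := ℓ / 2 with htdef
  have h2pos : (0:ℝ) < 1 + Real.sqrt 2 := by positivity
  have hsq2 : Real.sqrt 2 ^ 2 = 2 := Real.sq_sqrt (by norm_num)
  have hsinhlog : Real.sinh (Real.log (1 + Real.sqrt 2)) = 1 := by
    rw [Real.sinh_log h2pos]
    have hne : (1 + Real.sqrt 2) ≠ 0 := ne_of_gt h2pos
    field_simp
    nlinarith [hsq2]
  have hs : 1 ≤ Real.sinh t := by
    rw [← hsinhlog]
    exact Real.sinh_le_sinh.mpr (by rw [htdef]; linarith)
  have hspos : (0:ℝ) < Real.sinh t := by linarith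
  have hcpos : (0:ℝ) < Real.cosh t := Real.cosh_pos t
  have hc : Real.cosh t ^ 2 = Real.sinh t ^ 2 + 1 := Real.cosh_sq t
  have hsc : 1 < Real.sinh t * Real.cosh t := by
    nlinarith [hs, hc, hcpos, sq_nonneg (Real.cosh t - 1)]
  have hmul : Real.sinh t * Real.sqrt (Real.cosh t ^ 2 - 2)
      = Real.sqrt (Real.sinh t ^ 2 * (Real.cosh t ^ 2 - 2)) := by
    rw [Real.sqrt_mul (sq_nonneg _), Real.sqrt_sq (le_of_lt hspos)]
  have key : Real.sinh t * Real.sqrt (Real.cosh t ^ 2 - 2)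
      < Real.sinh t * Real.cosh t - 1 := by
    rw [hmul]
    rw [show Real.sqrt (Real.sinh t ^ 2 * (Real.cosh t ^ 2 - 2))
        < Real.sinh t * Real.cosh t - 1 ↔
        Real.sinh t ^ 2 * (Real.cosh t ^ 2 - 2)
        < (Real.sinh t * Real.cosh t - 1) ^ 2 from
      Real.sqrt_lt' (by linarith)]
    nlinarith [hc, hsc, hspos, hcpos, mul_pos hspos hcpos]
  have hmain : 1 < Real.sinh t *
      (Real.cosh t - Real.sqrt (Real.cosh t ^ 2 - 2)) := by
    have : Real.sinh t * (Real.cosh t - Real.sqrt (Real.cosh t ^ 2 - 2))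
        = Real.sinh t * Real.cosh t
          - Real.sinh t * Real.sqrt (Real.cosh t ^ 2 - 2) := by ring
    linarith [key, this.ge, this.le]
  refine ⟨div_pos (by linarith [hmain]) (by positivity), hmain⟩
end
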